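/- arXiv:math/0504474 — 2 statements merged into one kernel-verified Lean document; each statement's English description precedes it below -/
import Mathlib

section
/- Let Ω ⊆ ℂ be a nonempty connected open set and f₁, …, f_k : Ω → ℂ holomorphic functions such that for every natural number n ≥ 1 the power-sum function S_n(z) = Σᵢ fᵢ(z)ⁿ is constant on Ω. Then each fᵢ is constant on Ω. -/
/-!
By Newton's identities the power sums `∑ᵢ fᵢ(z)ⁿ`, `n ≥ 1`, determine the elementary symmetric
functions of the values `fᵢ(z)`, hence the polynomial `∏ᵢ (X - fᵢ(z))` and the multiset of its
roots. So every value `fᵢ(z)` lies in the finite set `{f₁(z₀), …, f_k(z₀)}`, and a continuous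
function on a connected set with values in a finite set is constant.
-/

open Finset MvPolynomial

section PowerSums

variable {σ R : Type*} [Fintype σ] [CommRing R] [IsDomain R] [CharZero R] {x y : σ → R}

theorem aeval_esymm_eq_of_sum_pow_eq
    (h : ∀ n, 0 < n → ∑ i, x i ^ n = ∑ i, y i ^ n) (m : ℕ) :
    aeval x (esymm σ R m) = aeval y (esymm σ R m) := by
  induction m using Nat.strong_induction_on with
  | _ m ih =>
    rcases Nat.eq_zero_or_pos m with rfl | hm
    · simp only [esymm_zero, map_one]
    refine mul_left_cancel₀ (Nat.cast_ne_zero.mpr hm.ne') ?_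
    calc (m : R) * aeval x (esymm σ R m)
        = aeval x ((m : MvPolynomial σ R) * esymm σ R m) := by simp
      _ = aeval y ((m : MvPolynomial σ R) * esymm σ R m) := by
        simp only [mul_esymm_eq_sum, map_mul, map_pow, map_neg, map_one, map_sum, psum, aeval_X]
        congr 1
        refine sum_congr rfl fun a ha => ?_
        obtain ⟨hsum, hlt⟩ := (mem_filter.mp ha).imp_left HasAntidiagonal.mem_antidiagonal.mp
        rw [ih a.1 hlt, h a.2 (by omega)]
      _ = m * aeval y (esymm σ R m) := by simp

theorem univ_val_map_eq_of_sum_pow_eq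
    (h : ∀ n, 0 < n → ∑ i, x i ^ n = ∑ i, y i ^ n) :
    univ.val.map x = univ.val.map y := by
  rw [← Polynomial.roots_multiset_prod_X_sub_C (univ.val.map x),
    ← Polynomial.roots_multiset_prod_X_sub_C (univ.val.map y),
    Multiset.prod_X_sub_X_eq_sum_esymm, Multiset.prod_X_sub_X_eq_sum_esymm]
  simp only [Multiset.card_map, ← aeval_esymm_eq_multiset_esymm σ R,
    aeval_esymm_eq_of_sum_pow_eq h]

theorem mem_range_of_sum_pow_eq
    (h : ∀ n, 0 < n → ∑ i, x i ^ n = ∑ i, y i ^ n) (i : σ) :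
    x i ∈ Set.range y := by
  obtain ⟨j, -, hj⟩ := Multiset.mem_map.mp
    (univ_val_map_eq_of_sum_pow_eq h ▸ Multiset.mem_map_of_mem x (mem_univ i))
  exact ⟨j, hj⟩

end PowerSums

theorem power_sums_constant_implies_constant_general
    (Ω : Set ℂ) (hΩc : IsConnected Ω)
    (k : ℕ) (f : Fin k → ℂ → ℂ)
    (hf : ∀ i, DifferentiableOn ℂ (f i) Ω)
    (hS : ∀ n : ℕ, 1 ≤ n → ∃ c : ℂ, ∀ z ∈ Ω, ∑ i : Fin k, (f i z) ^ n = c) :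
    ∀ i : Fin k, ∃ c : ℂ, ∀ z ∈ Ω, f i z = c := by
  obtain ⟨z₀, hz₀⟩ := hΩc.nonempty
  have hvalues : ∀ i, Set.MapsTo (f i) Ω (Set.range fun j => f j z₀) := by
    intro i z hz
    refine mem_range_of_sum_pow_eq (x := fun j => f j z) (fun n hn => ?_) i
    obtain ⟨c, hc⟩ := hS n hn
    rw [hc z hz, hc z₀ hz₀]
  intro i
  exact ⟨f i z₀, fun z hz => hΩc.isPreconnected.constant_of_mapsTo
    (Set.finite_range _).isDiscrete (hf i).continuousOn (hvalues i) hz hz₀⟩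

theorem power_sums_constant_implies_constant
    (Ω : Set ℂ) (hΩo : IsOpen Ω) (hΩc : IsConnected Ω)
    (k : ℕ) (f : Fin k → ℂ → ℂ)
    (hf : ∀ i, DifferentiableOn ℂ (f i) Ω)
    (hS : ∀ n : ℕ, 1 ≤ n → ∃ c : ℂ, ∀ z ∈ Ω, ∑ i : Fin k, (f i z) ^ n = c) :
    ∀ i : Fin k, ∃ c : ℂ, ∀ z ∈ Ω, f i z = c :=
  power_sums_constant_implies_constant_general Ω hΩc k f hf hS
end

section
/- Let Ω ⊆ ℂ be a connected open set, z₀ ∈ Ω, and f₁, …, f_k : Ω → ℂ holomorphic with f₁(z₀) = 1 and |f_j(z₀)| < 1 for all j ≥ 2. If for every n ≥ 1 the function z ↦ Σᵢ fᵢ(z)ⁿ has vanishing derivative at z₀, then f₁'(z₀) = 0. -/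
open Finset Filter Topology

/-
If `f₁(z₀) = 1` dominates the other values, the moments `Σᵢ fᵢ(z₀)^m fᵢ'(z₀)`, which vanish because
they are the derivatives of the power sums divided by `m + 1`, tend to `f₁'(z₀)` as `m → ∞`.
-/

theorem deriv_sum_pow {𝕜 ι : Type*} [NontriviallyNormedField 𝕜] (s : Finset ι) {f : ι → 𝕜 → 𝕜}
    {z : 𝕜} (hf : ∀ i ∈ s, DifferentiableAt 𝕜 (f i) z) (n : ℕ) :
    deriv (fun z => ∑ i ∈ s, f i z ^ n) z = n * ∑ i ∈ s, f i z ^ (n - 1) * deriv (f i) z := by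
  rw [deriv_fun_sum fun i hi => (hf i hi).fun_pow n, mul_sum]
  refine sum_congr rfl fun i hi => ?_
  rw [deriv_fun_pow (hf i hi)]
  ring

theorem tendsto_sum_pow_mul_of_norm_lt_one {𝕜 ι : Type*} [NormedField 𝕜] [Fintype ι]
    {a : ι → 𝕜} (c : ι → 𝕜) {i₀ : ι} (ha₀ : a i₀ = 1) (ha : ∀ j, j ≠ i₀ → ‖a j‖ < 1) :
    Tendsto (fun m : ℕ => ∑ i, a i ^ m * c i) atTop (𝓝 (c i₀)) := by
  classical
  rw [← Fintype.sum_pi_single' i₀ (c i₀)]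
  refine tendsto_finsetSum _ fun i _ => ?_
  by_cases hi : i = i₀
  · subst hi
    simp [ha₀]
  · rw [Pi.single_eq_of_ne hi, ← zero_mul (c i)]
    exact (tendsto_pow_atTop_nhds_zero_of_norm_lt_one (ha i hi)).mul_const _

theorem dominant_derivative_vanishes_general
    (Ω : Set ℂ) (hΩo : IsOpen Ω)
    (z₀ : ℂ) (hz₀ : z₀ ∈ Ω)
    (k : ℕ) (f : Fin (k + 1) → ℂ → ℂ)
    (hf : ∀ i, DifferentiableOn ℂ (f i) Ω)
    (hnorm : f 0 z₀ = 1)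
    (hdom : ∀ j : Fin (k + 1), j ≠ 0 → ‖f j z₀‖ < 1)
    (hderiv : ∀ n : ℕ, 1 ≤ n →
      deriv (fun z => ∑ i : Fin (k + 1), (f i z) ^ n) z₀ = 0) :
    deriv (f 0) z₀ = 0 := by
  have hdiff : ∀ i ∈ univ, DifferentiableAt ℂ (f i) z₀ := fun i _ =>
    (hf i).differentiableAt (hΩo.mem_nhds hz₀)
  have hmoment : ∀ m : ℕ, ∑ i, f i z₀ ^ m * deriv (f i) z₀ = 0 := fun m => by
    have h := hderiv (m + 1) m.succ_pos
    rw [deriv_sum_pow _ hdiff, Nat.add_sub_cancel] at h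
    exact (mul_eq_zero.mp h).resolve_left (Nat.cast_ne_zero.mpr m.succ_ne_zero)
  refine tendsto_nhds_unique
    (tendsto_sum_pow_mul_of_norm_lt_one (fun i => deriv (f i) z₀) hnorm hdom) ?_
  simpa only [hmoment] using tendsto_const_nhds

theorem dominant_derivative_vanishes
    (Ω : Set ℂ) (hΩo : IsOpen Ω) (hΩc : IsConnected Ω)
    (z₀ : ℂ) (hz₀ : z₀ ∈ Ω)
    (k : ℕ) (f : Fin (k + 1) → ℂ → ℂ)
    (hf : ∀ i, DifferentiableOn ℂ (f i) Ω)
    (hnorm : f 0 z₀ = 1)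
    (hdom : ∀ j : Fin (k + 1), j ≠ 0 → ‖f j z₀‖ < 1)
    (hderiv : ∀ n : ℕ, 1 ≤ n →
      deriv (fun z => ∑ i : Fin (k + 1), (f i z) ^ n) z₀ = 0) :
    deriv (f 0) z₀ = 0 :=
  dominant_derivative_vanishes_general Ω hΩo z₀ hz₀ k f hf hnorm hdom hderiv
end
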